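/- arXiv:2410.10541 — 3 statements merged into one kernel-verified Lean document; each statement's English description precedes it below -/
import Mathlib

section
/- Let ρ, p₁, p₂, p₃ be real numbers, and on ℝ⁴ let η(v,w) = -v₀w₀ + v₁w₁ + v₂w₂ + v₃w₃ be the Minkowski inner product, with a vector v called timelike when η(v,v) < 0. Let T be the bilinear form T(v,w) = ρ v₀w₀ + p₁v₁w₁ + p₂v₂w₂ + p₃v₃w₃ (the lowered-index form of the diagonal stress-energy tensor diag(-ρ, p₁, p₂, p₃)) and let its Minkowski trace be T̄ = -ρ + p₁ + p₂ + p₃. Then the strong energy condition T(v,v) ≥ (1/2) T̄ η(v,v) holds for all timelike v ∈ ℝ⁴ if and only if ρ + pᵢ ≥ 0 for each i ∈ {1,2,3} and ρ + p₁ + p₂ + p₃ ≥ 0. -/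
/-- Minkowski inner product on ℝ⁴. -/
noncomputable def minkowski (v w : Fin 4 → ℝ) : ℝ :=
  -(v 0 * w 0) + v 1 * w 1 + v 2 * w 2 + v 3 * w 3

/-- Lowered-index bilinear form of the diagonal stress-energy tensor diag(-ρ, p₁, p₂, p₃). -/
noncomputable def stressEnergy (ρ p₁ p₂ p₃ : ℝ) (v w : Fin 4 → ℝ) : ℝ :=
  ρ * (v 0 * w 0) + p₁ * (v 1 * w 1) + p₂ * (v 2 * w 2) + p₃ * (v 3 * w 3)

open Filter Topology

/-!
Writing `c = ρ + p₁ + p₂ + p₃`, the algebraic identity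
`T(v,v) - ½ T̄ η(v,v) = (c/2)·(-η(v,v)) + Σᵢ (ρ + pᵢ) vᵢ²`
shows that the strong energy condition asks a linear form to be nonnegative on the set of pairs
`(-η(v,v), (vᵢ²)ᵢ)` with `v` timelike. That set is the cone `(0, ∞) × [0, ∞)³`, and a linear form is
nonnegative there exactly when its coefficients are.
-/

lemma nonneg_of_forall_pos_mul_add_nonneg {a b : ℝ} (h : ∀ t > 0, 0 ≤ a * t + b) : 0 ≤ b := by
  have hlim : Tendsto (fun t => a * t + b) (𝓝[>] 0) (𝓝 b) := by
    have : Continuous fun t => a * t + b := by fun_prop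
    simpa using (this.tendsto 0).mono_left nhdsWithin_le_nhds
  exact ge_of_tendsto hlim (eventually_nhdsWithin_of_forall h)

theorem forall_pos_forall_nonneg_mul_add_sum_nonneg_iff {ι : Type*} [Fintype ι]
    (c : ℝ) (d : ι → ℝ) :
    (∀ t > 0, ∀ x : ι → ℝ, 0 ≤ x → 0 ≤ c * t + ∑ i, d i * x i) ↔ 0 ≤ c ∧ 0 ≤ d := by
  classical
  constructor
  · intro h
    refine ⟨by simpa using h 1 one_pos 0 le_rfl, fun i => ?_⟩
    refine nonneg_of_forall_pos_mul_add_nonneg (a := c) fun t ht => ?_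
    simpa [Pi.single_apply] using h t ht (Pi.single i 1) (Pi.single_nonneg.2 zero_le_one)
  · rintro ⟨hc, hd⟩ t ht x hx
    exact add_nonneg (mul_nonneg hc ht.le) (Finset.sum_nonneg fun i _ => mul_nonneg (hd i) (hx i))

lemma minkowski_self (v : Fin 4 → ℝ) : minkowski v v = -v 0 ^ 2 + ∑ i : Fin 3, v i.succ ^ 2 := by
  simp [minkowski, Fin.sum_univ_three]
  ring

lemma stressEnergy_sub_half_trace_mul_minkowski (ρ p₁ p₂ p₃ : ℝ) (v : Fin 4 → ℝ) :
    stressEnergy ρ p₁ p₂ p₃ v v - (1 / 2) * (-ρ + p₁ + p₂ + p₃) * minkowski v v =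
      (ρ + p₁ + p₂ + p₃) / 2 * -minkowski v v + ∑ i, ![ρ + p₁, ρ + p₂, ρ + p₃] i * v i.succ ^ 2 := by
  simp [minkowski, stressEnergy, Fin.sum_univ_three]
  ring

/-- Every point of the cone `(0, ∞) × [0, ∞)³` is `(-η(v,v), (vᵢ²)ᵢ)` for some timelike `v`. -/
lemma forall_timelike_iff (P : ℝ → (Fin 3 → ℝ) → Prop) :
    (∀ v : Fin 4 → ℝ, minkowski v v < 0 → P (-minkowski v v) (fun i => v i.succ ^ 2)) ↔
      ∀ t > 0, ∀ x : Fin 3 → ℝ, 0 ≤ x → P t x := by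
  constructor
  · intro h t ht x hx
    set v : Fin 4 → ℝ := Fin.cons √(t + ∑ i, x i) fun i => √(x i) with hv
    have hspatial : (fun i => v i.succ ^ 2) = x := funext fun i => by simp [hv, Real.sq_sqrt (hx i)]
    have hsum : 0 ≤ ∑ i, x i := Finset.sum_nonneg fun i _ => hx i
    have hη : minkowski v v = -t := by
      rw [minkowski_self, hspatial]
      simp [hv, Real.sq_sqrt (by linarith : 0 ≤ t + ∑ i, x i)]
    simpa [hη, hspatial] using h v (by linarith)
  · intro h v hv
    exact h _ (neg_pos.2 hv) _ fun i => sq_nonneg _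

/-- The strong energy condition for a type-one stress-energy tensor holds iff
ρ + pᵢ ≥ 0 for each i and ρ + p₁ + p₂ + p₃ ≥ 0. -/
theorem strong_energy_condition_iff (ρ p₁ p₂ p₃ : ℝ) :
    (∀ v : Fin 4 → ℝ, minkowski v v < 0 →
      stressEnergy ρ p₁ p₂ p₃ v v ≥ (1 / 2) * (-ρ + p₁ + p₂ + p₃) * minkowski v v) ↔
    (ρ + p₁ ≥ 0 ∧ ρ + p₂ ≥ 0 ∧ ρ + p₃ ≥ 0 ∧ ρ + p₁ + p₂ + p₃ ≥ 0) := by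
  have hgap : ∀ v : Fin 4 → ℝ,
      stressEnergy ρ p₁ p₂ p₃ v v ≥ (1 / 2) * (-ρ + p₁ + p₂ + p₃) * minkowski v v ↔
        0 ≤ (ρ + p₁ + p₂ + p₃) / 2 * -minkowski v v +
          ∑ i, ![ρ + p₁, ρ + p₂, ρ + p₃] i * v i.succ ^ 2 := fun v => by
    rw [← stressEnergy_sub_half_trace_mul_minkowski, ge_iff_le, sub_nonneg]
  simp only [hgap]
  rw [forall_timelike_iff (fun t x => 0 ≤ (ρ + p₁ + p₂ + p₃) / 2 * t +
      ∑ i, ![ρ + p₁, ρ + p₂, ρ + p₃] i * x i),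
    forall_pos_forall_nonneg_mul_add_sum_nonneg_iff, Pi.le_def, Fin.forall_fin_succ,
    Fin.forall_fin_two]
  simp only [Pi.zero_apply, Matrix.cons_val_zero, Matrix.cons_val_succ, Matrix.cons_val_one,
    ge_iff_le]
  constructor
  · rintro ⟨hc, h₁, h₂, h₃⟩
    exact ⟨h₁, h₂, h₃, by linarith⟩
  · rintro ⟨h₁, h₂, h₃, hc⟩
    exact ⟨by linarith, h₁, h₂, h₃⟩
end

section
/- Let s₀ ≤ s₁ be real numbers, let θ : ℝ → ℝ be differentiable on [s₀, s₁] with θ'(s) ≤ -θ(s)²/3 for every s ∈ [s₀, s₁], and suppose θ(s₀) < 0. Then s₁ - s₀ < 3/(-θ(s₀)); that is, any solution of the differential inequality with negative initial expansion cannot be continued for a proper time interval of length 3/|θ(s₀)| or longer. -/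
/-!
Since θ' ≤ -θ²/3 ≤ 0, the expansion decreases and stays negative. Then 1/θ is defined along
the curve and (1/θ)' = -θ'/θ² ≥ 1/3, so 1/θ(s₁) ≥ 1/θ(s₀) + (s₁ - s₀)/3; as 1/θ(s₁) < 0, this
forces s₁ - s₀ < -3/θ(s₀).
-/

open Set

section RiccatiComparison

variable {D : Set ℝ} {θ : ℝ → ℝ} {c : ℝ}

theorem antitoneOn_of_deriv_le_neg_mul_sq (hD : Convex ℝ D) (hc : 0 ≤ c)
    (hdiff : ∀ s ∈ D, DifferentiableAt ℝ θ s) (hineq : ∀ s ∈ D, deriv θ s ≤ -c * θ s ^ 2) :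
    AntitoneOn θ D := by
  have hθ : DifferentiableOn ℝ θ D := fun s hs => (hdiff s hs).differentiableWithinAt
  refine antitoneOn_of_deriv_nonpos hD hθ.continuousOn (hθ.mono interior_subset) fun s hs => ?_
  have := hineq s (interior_subset hs)
  nlinarith [mul_nonneg hc (sq_nonneg (θ s))]

theorem monotoneOn_inv_sub_mul_of_deriv_le_neg_mul_sq (hD : Convex ℝ D)
    (hdiff : ∀ s ∈ D, DifferentiableAt ℝ θ s) (hne : ∀ s ∈ D, θ s ≠ 0)
    (hineq : ∀ s ∈ D, deriv θ s ≤ -c * θ s ^ 2) :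
    MonotoneOn (fun s => (θ s)⁻¹ - c * s) D := by
  have hderiv : ∀ s ∈ D,
      HasDerivAt (fun s => (θ s)⁻¹ - c * s) (-deriv θ s / θ s ^ 2 - c) s := fun s hs =>
    ((hdiff s hs).hasDerivAt.inv (hne s hs)).sub (hasDerivAt_const_mul c)
  have hf : DifferentiableOn ℝ (fun s => (θ s)⁻¹ - c * s) D := fun s hs =>
    (hderiv s hs).differentiableAt.differentiableWithinAt
  refine monotoneOn_of_deriv_nonneg hD hf.continuousOn (hf.mono interior_subset) fun s hs => ?_
  have hs := interior_subset hs
  have hsq : 0 < θ s ^ 2 := sq_pos_of_ne_zero (hne s hs)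
  rw [(hderiv s hs).deriv, sub_nonneg, le_div_iff₀ hsq]
  linarith [hineq s hs]

theorem mul_sub_lt_neg_inv_of_deriv_le_neg_mul_sq {a b : ℝ} (hab : a ≤ b) (hc : 0 ≤ c)
    (hdiff : ∀ s ∈ Icc a b, DifferentiableAt ℝ θ s)
    (hineq : ∀ s ∈ Icc a b, deriv θ s ≤ -c * θ s ^ 2) (ha : θ a < 0) :
    c * (b - a) < -(θ a)⁻¹ := by
  have hneg : ∀ s ∈ Icc a b, θ s < 0 := fun s hs =>
    (antitoneOn_of_deriv_le_neg_mul_sq (convex_Icc a b) hc hdiff hineq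
      (left_mem_Icc.2 hab) hs hs.1).trans_lt ha
  have hmono := monotoneOn_inv_sub_mul_of_deriv_le_neg_mul_sq (convex_Icc a b) hdiff
    (fun s hs => (hneg s hs).ne) hineq (left_mem_Icc.2 hab) (right_mem_Icc.2 hab) hab
  have hb : (θ b)⁻¹ < 0 := inv_lt_zero.2 (hneg b (right_mem_Icc.2 hab))
  dsimp only at hmono
  linarith

end RiccatiComparison

/-- A solution of the Raychaudhuri differential inequality θ' ≤ -θ²/3 with negative
initial expansion θ(s₀) < 0 cannot be continued for a proper time of length
3/(-θ(s₀)) or longer: s₁ - s₀ < 3/(-θ(s₀)). -/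
theorem finite_time_singularity (s₀ s₁ : ℝ) (h01 : s₀ ≤ s₁) (θ : ℝ → ℝ)
    (hdiff : ∀ s ∈ Set.Icc s₀ s₁, DifferentiableAt ℝ θ s)
    (hineq : ∀ s ∈ Set.Icc s₀ s₁, deriv θ s ≤ -(θ s) ^ 2 / 3)
    (h0 : θ s₀ < 0) :
    s₁ - s₀ < 3 / (-θ s₀) := by
  have h := mul_sub_lt_neg_inv_of_deriv_le_neg_mul_sq h01 (by norm_num : (0 : ℝ) ≤ 1 / 3) hdiff
    (fun s hs => (hineq s hs).trans_eq (by ring)) h0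
  rw [div_neg, div_eq_mul_inv]
  linarith
end

section
/- Let s₀ ≤ s₁ be real numbers, let θ : ℝ → ℝ be differentiable on [s₀, s₁] with θ'(s) ≤ -θ(s)²/3 for every s ∈ [s₀, s₁], and suppose θ(s₀) < 0. Then for every s ∈ [s₀, s₁] one has 3 + (s - s₀)θ(s₀) > 0 and θ(s) ≤ 3θ(s₀) / (3 + (s - s₀)θ(s₀)). -/
/-- Quantitative collapse bound: for a solution of the Raychaudhuri differential
inequality θ' ≤ -θ²/3 with θ(s₀) < 0, one has 3 + (s - s₀)θ(s₀) > 0 and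
θ(s) ≤ 3θ(s₀)/(3 + (s - s₀)θ(s₀)) on [s₀, s₁]. -/
theorem expansion_collapse_bound (s₀ s₁ : ℝ) (h01 : s₀ ≤ s₁) (θ : ℝ → ℝ)
    (hdiff : ∀ s ∈ Set.Icc s₀ s₁, DifferentiableAt ℝ θ s)
    (hineq : ∀ s ∈ Set.Icc s₀ s₁, deriv θ s ≤ -(θ s) ^ 2 / 3)
    (h0 : θ s₀ < 0) :
    ∀ s ∈ Set.Icc s₀ s₁,
      0 < 3 + (s - s₀) * θ s₀ ∧ θ s ≤ 3 * θ s₀ / (3 + (s - s₀) * θ s₀) := by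
  have hcont : ContinuousOn θ (Set.Icc s₀ s₁) := fun x hx => (hdiff x hx).continuousAt.continuousWithinAt
  have hint : interior (Set.Icc s₀ s₁) = Set.Ioo s₀ s₁ := interior_Icc
  -- θ is antitone on [s₀, s₁]
  have hanti : AntitoneOn θ (Set.Icc s₀ s₁) := by
    apply antitoneOn_of_deriv_nonpos (convex_Icc _ _) hcont
    · intro x hx
      rw [hint] at hx
      exact (hdiff x (Set.Ioo_subset_Icc_self hx)).differentiableWithinAt
    · intro x hx
      rw [hint] at hx
      have := hineq x (Set.Ioo_subset_Icc_self hx)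
      nlinarith [sq_nonneg (θ x)]
  -- hence θ s < 0 on the interval
  have hneg : ∀ s ∈ Set.Icc s₀ s₁, θ s < 0 := by
    intro s hs
    have h0mem : s₀ ∈ Set.Icc s₀ s₁ := Set.left_mem_Icc.mpr h01
    exact lt_of_le_of_lt (hanti h0mem hs hs.1) h0
  -- the function ψ s = (θ s)⁻¹ - s/3 is monotone
  set ψ : ℝ → ℝ := fun s => (θ s)⁻¹ - s / 3 with hψ
  have hmono : MonotoneOn ψ (Set.Icc s₀ s₁) := by
    apply monotoneOn_of_deriv_nonneg (convex_Icc _ _)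
    · exact ((hcont.inv₀ (fun x hx => (hneg x hx).ne)).sub
        ((continuous_id.div_const 3).continuousOn))
    · intro x hx
      rw [hint] at hx
      have hx' := Set.Ioo_subset_Icc_self hx
      exact (((hdiff x hx').inv (hneg x hx').ne).sub
        ((differentiableAt_id.div_const 3))).differentiableWithinAt
    · intro x hx
      rw [hint] at hx
      have hx' := Set.Ioo_subset_Icc_self hx
      have hθx := hneg x hx'
      have hd : HasDerivAt ψ (-(deriv θ x) / (θ x) ^ 2 - 1 / 3) x := by
        have h1 : HasDerivAt θ (deriv θ x) x := (hdiff x hx').hasDerivAt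
        have h2 := h1.inv hθx.ne
        have h3 : HasDerivAt (fun s : ℝ => s / 3) (1 / 3) x := by
          simpa using (hasDerivAt_id x).div_const 3
        exact h2.sub h3
      rw [hd.deriv]
      have hi := hineq x hx'
      have hsq : 0 < (θ x) ^ 2 := pow_two_pos_of_ne_zero hθx.ne
      rw [sub_nonneg, le_div_iff₀ hsq]
      nlinarith
  intro s hs
  have h0mem : s₀ ∈ Set.Icc s₀ s₁ := Set.left_mem_Icc.mpr h01
  have hm := hmono h0mem hs hs.1
  simp only [hψ] at hm
  have hθs := hneg s hs
  have hθs0 : θ s₀ ≠ 0 := h0.ne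
  -- b := (θ s₀)⁻¹ + (s - s₀)/3 ≤ (θ s)⁻¹ < 0
  have hb : (θ s₀)⁻¹ + (s - s₀) / 3 ≤ (θ s)⁻¹ := by linarith
  have hinvneg : (θ s)⁻¹ < 0 := inv_neg''.mpr hθs
  have hbneg : (θ s₀)⁻¹ + (s - s₀) / 3 < 0 := lt_of_le_of_lt hb hinvneg
  have hA : 3 + (s - s₀) * θ s₀ = (3 * θ s₀) * ((θ s₀)⁻¹ + (s - s₀) / 3) := by
    field_simp
  have hApos : 0 < 3 + (s - s₀) * θ s₀ := by
    rw [hA]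
    exact mul_pos_of_neg_of_neg (by linarith) hbneg
  refine ⟨hApos, ?_⟩
  have hinv : 1 / ((θ s)⁻¹) ≤ 1 / ((θ s₀)⁻¹ + (s - s₀) / 3) :=
    one_div_le_one_div_of_neg_of_le hinvneg hb
  rw [one_div, inv_inv] at hinv
  have heq : 1 / ((θ s₀)⁻¹ + (s - s₀) / 3) = 3 * θ s₀ / (3 + (s - s₀) * θ s₀) := by
    rw [hA]
    rw [eq_div_iff (by rw [← hA]; exact hApos.ne')]
    rw [one_div, mul_comm, mul_assoc, mul_inv_cancel₀ hbneg.ne, mul_one]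
  rw [heq] at hinv
  exact hinv
end
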